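/- arXiv:2405.15681 — 10 statements merged into one kernel-verified Lean document; each statement's English description precedes it below -/
import Mathlib

section
/- Let f : C → ℝ be convex on a convex set C in a real vector space, x₁,...,xₙ ∈ C, and p, q be nonnegative n-tuples with ∑pᵢ = ∑qᵢ = 1 and qᵢ > 0 for all i. Let m = min_i (pᵢ/qᵢ) and M = max_i (pᵢ/qᵢ). Then M·(∑qᵢf(xᵢ) − f(∑qᵢxᵢ)) ≥ ∑pᵢf(xᵢ) − f(∑pᵢxᵢ) ≥ m·(∑qᵢf(xᵢ) − f(∑qᵢxᵢ)). -/
/-! If `c qᵢ ≤ pᵢ` with `c ≥ 0`, then `∑ pᵢ xᵢ = ∑ (pᵢ - c qᵢ) xᵢ + c ∑ qᵢ xᵢ` is a convex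
combination of the points `xᵢ` and the barycenter `∑ qᵢ xᵢ`, and Jensen's inequality for it is
exactly `c J(q) ≤ J(p)`. Taking `c = m` gives the lower bound; taking `c = 1/M` with the roles
of `p` and `q` exchanged gives the upper bound. -/

open Finset

section

variable {𝕜 E ι : Type*} [Field 𝕜] [LinearOrder 𝕜] [IsStrictOrderedRing 𝕜]
  [AddCommGroup E] [Module 𝕜 E]

def jensenGap (f : E → 𝕜) (s : Finset ι) (w : ι → 𝕜) (x : ι → E) : 𝕜 :=
  ∑ i ∈ s, w i * f (x i) - f (∑ i ∈ s, w i • x i)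

variable {C : Set E} {f : E → 𝕜} {s : Finset ι} {x : ι → E} {p q : ι → 𝕜}

theorem ConvexOn.smul_jensenGap_le (hf : ConvexOn 𝕜 C f) (hx : ∀ i ∈ s, x i ∈ C)
    (hq : ∀ i ∈ s, 0 ≤ q i) (hp1 : ∑ i ∈ s, p i = 1) (hq1 : ∑ i ∈ s, q i = 1) {c : 𝕜}
    (hc : 0 ≤ c) (hcq : ∀ i ∈ s, c * q i ≤ p i) :
    c * jensenGap f s q x ≤ jensenGap f s p x := by
  have hbary : ∑ i ∈ s, q i • x i ∈ C := hf.1.sum_mem hq hq1 hx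
  have hweights : c + ∑ i ∈ s, (p i - c * q i) = 1 := by
    rw [sum_sub_distrib, ← mul_sum, hp1, hq1]; ring
  have hjensen := hf.map_add_sum_le (fun i hi => sub_nonneg.2 (hcq i hi)) hweights hx hc hbary
  have hpoint : c • ∑ i ∈ s, q i • x i + ∑ i ∈ s, (p i - c * q i) • x i
      = ∑ i ∈ s, p i • x i := by
    simp only [smul_sum, smul_smul, sub_smul, sum_sub_distrib]; abel
  have hvalue : c • f (∑ i ∈ s, q i • x i) + ∑ i ∈ s, (p i - c * q i) • f (x i)
      = c * f (∑ i ∈ s, q i • x i) + ∑ i ∈ s, p i * f (x i) - c * ∑ i ∈ s, q i * f (x i) := by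
    simp only [smul_eq_mul, sub_mul, sum_sub_distrib, mul_sum, mul_assoc]; ring
  rw [hpoint, hvalue] at hjensen
  unfold jensenGap
  linarith

theorem ConvexOn.jensenGap_le_smul (hf : ConvexOn 𝕜 C f) (hx : ∀ i ∈ s, x i ∈ C)
    (hp : ∀ i ∈ s, 0 ≤ p i) (hp1 : ∑ i ∈ s, p i = 1) (hq1 : ∑ i ∈ s, q i = 1) {M : 𝕜}
    (hMq : ∀ i ∈ s, p i ≤ M * q i) :
    jensenGap f s p x ≤ M * jensenGap f s q x := by
  have hM : 1 ≤ M := by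
    calc 1 = ∑ i ∈ s, p i := hp1.symm
      _ ≤ ∑ i ∈ s, M * q i := sum_le_sum hMq
      _ = M := by rw [← mul_sum, hq1, mul_one]
  have hM₀ : 0 < M := one_pos.trans_le hM
  have h := hf.smul_jensenGap_le hx hp hq1 hp1 (inv_nonneg.2 hM₀.le) fun i hi => by
    rw [inv_mul_le_iff₀ hM₀]; exact hMq i hi
  rwa [inv_mul_le_iff₀ hM₀] at h

end

theorem stmt0_general {E : Type*} [AddCommGroup E] [Module ℝ E] {C : Set E} {f : E → ℝ}
    (hf : ConvexOn ℝ C f) {n : ℕ} (x : Fin n → E) (hx : ∀ i, x i ∈ C)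
    (p q : Fin n → ℝ) (hp : ∀ i, 0 ≤ p i) (hq : ∀ i, 0 < q i)
    (hp1 : ∑ i, p i = 1) (hq1 : ∑ i, q i = 1)
    (m M : ℝ) (hm : IsLeast (Set.range fun i => p i / q i) m)
    (hM : IsGreatest (Set.range fun i => p i / q i) M) :
    M * (∑ i, q i * f (x i) - f (∑ i, q i • x i)) ≥
        ∑ i, p i * f (x i) - f (∑ i, p i • x i) ∧
    ∑ i, p i * f (x i) - f (∑ i, p i • x i) ≥
        m * (∑ i, q i * f (x i) - f (∑ i, q i • x i)) := by
  obtain ⟨⟨i₀, rfl⟩, hm⟩ := hm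
  have hMq : ∀ i ∈ univ, p i ≤ M * q i := fun i _ =>
    (div_le_iff₀ (hq i)).1 (hM.2 ⟨i, rfl⟩)
  have hmq : ∀ i ∈ univ, p i₀ / q i₀ * q i ≤ p i := fun i _ =>
    (le_div_iff₀ (hq i)).1 (hm ⟨i, rfl⟩)
  exact ⟨hf.jensenGap_le_smul (fun i _ => hx i) (fun i _ => hp i) hp1 hq1 hMq,
    hf.smul_jensenGap_le (fun i _ => hx i) (fun i _ => (hq i).le) hp1 hq1
      (div_nonneg (hp i₀) (hq i₀).le) hmq⟩

theorem stmt0 {E : Type*} [AddCommGroup E] [Module ℝ E] {C : Set E} {f : E → ℝ}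
    (hf : ConvexOn ℝ C f) {n : ℕ} (hn : 0 < n) (x : Fin n → E) (hx : ∀ i, x i ∈ C)
    (p q : Fin n → ℝ) (hp : ∀ i, 0 ≤ p i) (hq : ∀ i, 0 < q i)
    (hp1 : ∑ i, p i = 1) (hq1 : ∑ i, q i = 1)
    (m M : ℝ) (hm : IsLeast (Set.range fun i => p i / q i) m)
    (hM : IsGreatest (Set.range fun i => p i / q i) M) :
    M * (∑ i, q i * f (x i) - f (∑ i, q i • x i)) ≥
        ∑ i, p i * f (x i) - f (∑ i, p i • x i) ∧
    ∑ i, p i * f (x i) - f (∑ i, p i • x i) ≥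
        m * (∑ i, q i * f (x i) - f (∑ i, q i • x i)) :=
  stmt0_general hf x hx p q hp hq hp1 hq1 m M hm hM
end

section
/- Let f be convex on [a,b] and p, q > 0 with p + q = 1. Then min{p,q}·[f(a)+f(b) − 2f((a+b)/2)] ≤ p·f(a) + q·f(b) − f(pa+qb) ≤ max{p,q}·[f(a)+f(b) − 2f((a+b)/2)]. -/
private lemma aux_lower {s : Set ℝ} {f : ℝ → ℝ} (hf : ConvexOn ℝ s f)
    {a b : ℝ} (ha : a ∈ s) (hb : b ∈ s) {p q : ℝ} (hp : 0 < p) (hq : 0 < q)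
    (hpq : p + q = 1) (hle : p ≤ q) :
    p * (f a + f b - 2 * f ((a + b) / 2)) ≤ p * f a + q * f b - f (p * a + q * b) := by
  have hq1 : q = 1 - p := by linarith
  subst hq1
  have half : (0:ℝ) ≤ 1/2 := by norm_num
  have hm : (a + b) / 2 ∈ s := by
    have h := hf.1 ha hb half half (by norm_num)
    rwa [show ((1:ℝ)/2) • a + ((1:ℝ)/2) • b = (a + b) / 2 by
      simp only [smul_eq_mul]; ring] at h
  have h2p : 0 ≤ 2 * p := by linarith
  have h2p' : 0 ≤ 1 - 2 * p := by linarith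
  have key := hf.2 hm hb h2p h2p' (by ring)
  rw [show (2 * p) • ((a + b) / 2) + (1 - 2 * p) • b = p * a + (1 - p) * b by
    simp only [smul_eq_mul]; ring] at key
  simp only [smul_eq_mul] at key
  nlinarith [key]

private lemma aux_upper {s : Set ℝ} {f : ℝ → ℝ} (hf : ConvexOn ℝ s f)
    {a b : ℝ} (ha : a ∈ s) (hb : b ∈ s) {p q : ℝ} (hp : 0 < p) (hq : 0 < q)
    (hpq : p + q = 1) (hle : p ≤ q) :
    p * f a + q * f b - f (p * a + q * b) ≤ q * (f a + f b - 2 * f ((a + b) / 2)) := by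
  have hx : p • a + q • b ∈ s := hf.1 ha hb hp.le hq.le hpq
  rw [show p • a + q • b = p * a + q * b by simp only [smul_eq_mul]] at hx
  have hw1 : 0 ≤ (q - p) / (2 * q) := div_nonneg (by linarith) (by linarith)
  have hw2 : 0 ≤ 1 / (2 * q) := by positivity
  have hsum : (q - p) / (2 * q) + 1 / (2 * q) = 1 := by
    field_simp; linarith
  have key := hf.2 ha hx hw1 hw2 hsum
  rw [show ((q - p) / (2 * q)) • a + (1 / (2 * q)) • (p * a + q * b) = (a + b) / 2 by
    simp only [smul_eq_mul]; field_simp; ring] at key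
  simp only [smul_eq_mul] at key
  have hq2 : 0 < 2 * q := by linarith
  have key2 : 2 * q * f ((a + b) / 2) ≤ (q - p) * f a + f (p * a + q * b) := by
    have h := mul_le_mul_of_nonneg_left key hq2.le
    calc 2 * q * f ((a + b) / 2)
        ≤ 2 * q * ((q - p) / (2 * q) * f a + 1 / (2 * q) * f (p * a + q * b)) := h
      _ = (q - p) * f a + f (p * a + q * b) := by field_simp
  linarith

theorem stmt3 {a b : ℝ} (hab : a ≤ b) {f : ℝ → ℝ}
    (hf : ConvexOn ℝ (Set.Icc a b) f)
    (p q : ℝ) (hp : 0 < p) (hq : 0 < q) (hpq : p + q = 1) :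
    min p q * (f a + f b - 2 * f ((a + b) / 2)) ≤
      p * f a + q * f b - f (p * a + q * b) ∧
    p * f a + q * f b - f (p * a + q * b) ≤
      max p q * (f a + f b - 2 * f ((a + b) / 2)) := by
  have ha : a ∈ Set.Icc a b := Set.left_mem_Icc.2 hab
  have hb : b ∈ Set.Icc a b := Set.right_mem_Icc.2 hab
  rcases le_total p q with h | h
  · rw [min_eq_left h, max_eq_right h]
    exact ⟨aux_lower hf ha hb hp hq hpq h, aux_upper hf ha hb hp hq hpq h⟩
  · rw [min_eq_right h, max_eq_left h]
    have h1 := aux_lower hf hb ha hq hp (by linarith) h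
    have h2 := aux_upper hf hb ha hq hp (by linarith) h
    have e1 : (b + a) / 2 = (a + b) / 2 := by ring
    have e2 : q * b + p * a = p * a + q * b := by ring
    rw [e1, e2] at h1 h2
    constructor <;> linarith
end

section
/- Let f : [0,b) → ℝ (0 < b ≤ ∞) be continuously differentiable and Φ-uniformly convex with Φ ≥ 0 satisfying f(y) − f(x) ≥ f'(x)(y−x) + Φ(|y−x|). Let p, q be probability vectors with qᵢ > 0, m = min_i(pᵢ/qᵢ), x ∈ [0,b)ⁿ, x̄_p = ∑pⱼxⱼ, x̄_q = ∑qⱼxⱼ. Then Jₙ(f,x,p) − m·Jₙ(f,x,q) ≥ m·Φ(|x̄_q − x̄_p|) + ∑_{i=1}^n (pᵢ − m·qᵢ)·Φ(|xᵢ − x̄_p|). -/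
theorem stmt9 {D : Set ℝ}
    (hD : (∃ b : ℝ, 0 < b ∧ D = Set.Ico 0 b) ∨ D = Set.Ici 0)
    {f f' Φ : ℝ → ℝ}
    (hderiv : ∀ x ∈ D, HasDerivAt f (f' x) x)
    (hcont : ContinuousOn f' D)
    (hΦpos : ∀ t, 0 ≤ t → 0 ≤ Φ t)
    (hgrad : ∀ x ∈ D, ∀ y ∈ D, f y - f x ≥ f' x * (y - x) + Φ |y - x|)
    {n : ℕ} (hn : 0 < n) (x : Fin n → ℝ) (hx : ∀ i, x i ∈ D)
    (p q : Fin n → ℝ) (hp : ∀ i, 0 ≤ p i) (hq : ∀ i, 0 < q i)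
    (hp1 : ∑ i, p i = 1) (hq1 : ∑ i, q i = 1)
    (m : ℝ) (hm : IsLeast (Set.range fun i => p i / q i) m) :
    (∑ i, p i * f (x i) - f (∑ i, p i * x i)) -
      m * (∑ i, q i * f (x i) - f (∑ i, q i * x i)) ≥
    m * Φ |(∑ j, q j * x j) - ∑ j, p j * x j| +
      ∑ i, (p i - m * q i) * Φ |x i - ∑ j, p j * x j| := by
  obtain ⟨i₀, hi₀⟩ := hm.1
  have hDconv : Convex ℝ D := by
    rcases hD with ⟨b, _, rfl⟩ | rfl
    · exact convex_Ico 0 b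
    · exact convex_Ici 0
  have hm0 : 0 ≤ m := hi₀ ▸ div_nonneg (hp i₀) (hq i₀).le
  have hcoef : ∀ i, 0 ≤ p i - m * q i := by
    intro i
    have h : m ≤ p i / q i := hm.2 ⟨i, rfl⟩
    rw [le_div_iff₀ (hq i)] at h
    linarith
  have key : ∀ (g : Fin n → ℝ) (c : ℝ), ∑ i, (p i - m * q i) * (g i - c) =
      (∑ i, p i * g i) - m * (∑ i, q i * g i) - (1 - m) * c := by
    intro g c
    have h1 : ∑ i, (p i - m * q i) * (g i - c)
        = ∑ i, (p i * g i - m * (q i * g i) - (p i * c - m * (q i * c))) :=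
      Finset.sum_congr rfl fun i _ => by ring
    rw [h1, Finset.sum_sub_distrib, Finset.sum_sub_distrib, Finset.sum_sub_distrib,
      ← Finset.mul_sum, ← Finset.mul_sum, ← Finset.sum_mul, ← Finset.sum_mul, hp1, hq1]
    ring
  set xp := ∑ j, p j * x j with hxp
  set xq := ∑ j, q j * x j with hxq
  have hxpD : xp ∈ D := by
    have := hDconv.sum_mem (t := Finset.univ) (fun i _ => hp i) hp1 (fun i _ => hx i)
    simpa [smul_eq_mul] using this
  have hxqD : xq ∈ D := by
    have := hDconv.sum_mem (t := Finset.univ) (fun i _ => (hq i).le) hq1 (fun i _ => hx i)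
    simpa [smul_eq_mul] using this
  have h2 : f xq - f xp ≥ f' xp * (xq - xp) + Φ |xq - xp| := hgrad xp hxpD xq hxqD
  have hS : ∑ i, (p i - m * q i) * (f' xp * (x i - xp) + Φ |x i - xp|) ≤
      ∑ i, (p i - m * q i) * (f (x i) - f xp) :=
    Finset.sum_le_sum fun i _ =>
      mul_le_mul_of_nonneg_left (hgrad xp hxpD (x i) (hx i)) (hcoef i)
  have e1 : ∑ i, (p i - m * q i) * (f (x i) - f xp) =
      (∑ i, p i * f (x i)) - m * (∑ i, q i * f (x i)) - (1 - m) * f xp :=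
    key (fun i => f (x i)) (f xp)
  have e2 : ∑ i, (p i - m * q i) * (f' xp * (x i - xp)) = f' xp * (m * (xp - xq)) := by
    have h3 : ∑ i, (p i - m * q i) * (f' xp * (x i - xp)) =
        f' xp * ∑ i, (p i - m * q i) * (x i - xp) := by
      rw [Finset.mul_sum]
      exact Finset.sum_congr rfl fun i _ => by ring
    rw [h3, key x xp, ← hxp, ← hxq]
    ring
  have e3 : ∑ i, (p i - m * q i) * (f' xp * (x i - xp) + Φ |x i - xp|) =
      f' xp * (m * (xp - xq)) + ∑ i, (p i - m * q i) * Φ |x i - xp| := by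
    rw [← e2, ← Finset.sum_add_distrib]
    exact Finset.sum_congr rfl fun i _ => by ring
  have h2' : m * (f xq - f xp) ≥ m * (f' xp * (xq - xp)) + m * Φ |xq - xp| := by
    nlinarith [mul_le_mul_of_nonneg_left h2 hm0]
  rw [e1, e3] at hS
  nlinarith [hS, h2']
end

section
/- Let f : [0,b) → ℝ be continuously differentiable and Φ-uniformly convex with Φ ≥ 0 satisfying f(y) − f(x) ≥ f'(x)(y−x) + Φ(|y−x|). Let p, q be probability vectors with qᵢ > 0, M = max_i(pᵢ/qᵢ), x ∈ [0,b)ⁿ, x̄_p = ∑pⱼxⱼ, x̄_q = ∑qⱼxⱼ. Then M·Jₙ(f,x,q) − Jₙ(f,x,p) ≥ ∑_{i=1}^n (M·qᵢ − pᵢ)·Φ(|xᵢ − x̄_q|) + Φ(|x̄_q − x̄_p|). -/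
theorem stmt10 {D : Set ℝ}
    (hD : (∃ b : ℝ, 0 < b ∧ D = Set.Ico 0 b) ∨ D = Set.Ici 0)
    {f f' Φ : ℝ → ℝ}
    (hderiv : ∀ x ∈ D, HasDerivAt f (f' x) x)
    (hcont : ContinuousOn f' D)
    (hΦpos : ∀ t, 0 ≤ t → 0 ≤ Φ t)
    (hgrad : ∀ x ∈ D, ∀ y ∈ D, f y - f x ≥ f' x * (y - x) + Φ |y - x|)
    {n : ℕ} (hn : 0 < n) (x : Fin n → ℝ) (hx : ∀ i, x i ∈ D)
    (p q : Fin n → ℝ) (hp : ∀ i, 0 ≤ p i) (hq : ∀ i, 0 < q i)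
    (hp1 : ∑ i, p i = 1) (hq1 : ∑ i, q i = 1)
    (M : ℝ) (hM : IsGreatest (Set.range fun i => p i / q i) M) :
    M * (∑ i, q i * f (x i) - f (∑ i, q i * x i)) -
      (∑ i, p i * f (x i) - f (∑ i, p i * x i)) ≥
    (∑ i, (M * q i - p i) * Φ |x i - ∑ j, q j * x j|) +
      Φ |(∑ j, q j * x j) - ∑ j, p j * x j| := by
  have hDconv : Convex ℝ D := by
    rcases hD with ⟨b, hb, rfl⟩ | rfl
    · exact convex_Ico 0 b
    · exact convex_Ici 0
  set xq := ∑ j, q j * x j with hxqdef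
  set xp := ∑ j, p j * x j with hxpdef
  have hxqD : xq ∈ D :=
    hDconv.sum_mem (fun i _ => (hq i).le) hq1 (fun i _ => hx i)
  have hxpD : xp ∈ D :=
    hDconv.sum_mem (fun i _ => hp i) hp1 (fun i _ => hx i)
  have hMq : ∀ i, p i ≤ M * q i := by
    intro i
    have h := hM.2 (Set.mem_range_self i)
    rw [div_le_iff₀ (hq i)] at h
    linarith
  have key : ∀ i, (M * q i - p i) * (f' xq * (x i - xq) + Φ |x i - xq|)
      ≤ (M * q i - p i) * (f (x i) - f xq) := fun i =>
    mul_le_mul_of_nonneg_left (hgrad xq hxqD (x i) (hx i)) (by linarith [hMq i])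
  have hsum : ∑ i, (M * q i - p i) * (f' xq * (x i - xq) + Φ |x i - xq|)
      ≤ ∑ i, (M * q i - p i) * (f (x i) - f xq) :=
    Finset.sum_le_sum (fun i _ => key i)
  have h2 := hgrad xq hxqD xp hxpD
  rw [abs_sub_comm] at h2
  have e2 : ∑ i, (M * q i - p i) * (f' xq * (x i - xq) + Φ |x i - xq|)
      = f' xq * (xq - xp) + ∑ i, (M * q i - p i) * Φ |x i - xq| := by
    have h : ∀ i, (M * q i - p i) * (f' xq * (x i - xq) + Φ |x i - xq|)
        = (f' xq * M) * (q i * x i) - f' xq * (p i * x i)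
          - (f' xq * xq * M) * q i + (f' xq * xq) * p i
          + (M * q i - p i) * Φ |x i - xq| := fun i => by ring
    rw [Finset.sum_congr rfl fun i _ => h i]
    simp only [Finset.sum_add_distrib, Finset.sum_sub_distrib, ← Finset.mul_sum,
      hp1, hq1, ← hxqdef, ← hxpdef]
    ring
  have e1 : ∑ i, (M * q i - p i) * (f (x i) - f xq)
      = (M * ∑ i, q i * f (x i) - ∑ i, p i * f (x i)) - (M - 1) * f xq := by
    have h : ∀ i, (M * q i - p i) * (f (x i) - f xq)
        = M * (q i * f (x i)) - p i * f (x i) - (M * f xq) * q i + f xq * p i :=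
      fun i => by ring
    rw [Finset.sum_congr rfl fun i _ => h i]
    simp only [Finset.sum_add_distrib, Finset.sum_sub_distrib, ← Finset.mul_sum,
      hp1, hq1]
    ring
  rw [e1, e2] at hsum
  linarith
end

section
/- Let f be Φ-uniformly convex and continuously differentiable on [0,b), x₁,x₂ ∈ [0,b), p₁+p₂ = q₁+q₂ = 1 with pᵢ ≥ 0, qᵢ > 0, and m = p₁/q₁ ≤ p₂/q₂. With x̄_p = p₁x₁+p₂x₂ and x̄_q = q₁x₁+q₂x₂: J₂(f,x,p) − m·J₂(f,x,q) ≥ m·Φ(|x̄_q − x̄_p|) + (1−m)·Φ(p₁|x₂−x₁|). -/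
theorem stmt11 {D : Set ℝ}
    (hD : (∃ b : ℝ, 0 < b ∧ D = Set.Ico 0 b) ∨ D = Set.Ici 0)
    {f f' Φ : ℝ → ℝ}
    (hderiv : ∀ x ∈ D, HasDerivAt f (f' x) x)
    (hcont : ContinuousOn f' D)
    (hΦpos : ∀ t, 0 ≤ t → 0 ≤ Φ t)
    (hgrad : ∀ x ∈ D, ∀ y ∈ D, f y - f x ≥ f' x * (y - x) + Φ |y - x|)
    (x₁ x₂ : ℝ) (hx₁ : x₁ ∈ D) (hx₂ : x₂ ∈ D)
    (p₁ p₂ q₁ q₂ : ℝ) (hp₁ : 0 ≤ p₁) (hp₂ : 0 ≤ p₂) (hq₁ : 0 < q₁) (hq₂ : 0 < q₂)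
    (hp : p₁ + p₂ = 1) (hq : q₁ + q₂ = 1)
    (m : ℝ) (hm : m = p₁ / q₁) (hmle : p₁ / q₁ ≤ p₂ / q₂) :
    (p₁ * f x₁ + p₂ * f x₂ - f (p₁ * x₁ + p₂ * x₂)) -
      m * (q₁ * f x₁ + q₂ * f x₂ - f (q₁ * x₁ + q₂ * x₂)) ≥
    m * Φ |(q₁ * x₁ + q₂ * x₂) - (p₁ * x₁ + p₂ * x₂)| +
      (1 - m) * Φ (p₁ * |x₂ - x₁|) := by
  have hDconvex : Convex ℝ D := by
    rcases hD with ⟨b, _, rfl⟩ | rfl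
    · exact convex_Ico 0 b
    · exact convex_Ici 0
  have hm0 : 0 ≤ m := by rw [hm]; positivity
  have hmq1 : m * q₁ = p₁ := by rw [hm]; field_simp
  have hmq2 : m * q₂ = m - p₁ := by linear_combination m * hq - hmq1
  have hm1 : m ≤ 1 := by
    rw [div_le_div_iff₀ hq₁ hq₂] at hmle
    rw [hm, div_le_one hq₁]
    nlinarith
  have hxp : p₁ * x₁ + p₂ * x₂ ∈ D := by
    simpa [smul_eq_mul] using hDconvex hx₁ hx₂ hp₁ hp₂ hp
  have hxq : q₁ * x₁ + q₂ * x₂ ∈ D := by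
    simpa [smul_eq_mul] using hDconvex hx₁ hx₂ hq₁.le hq₂.le hq
  have h1 := hgrad _ hxp _ hxq
  have h2 := hgrad _ hxp x₂ hx₂
  set xp := p₁ * x₁ + p₂ * x₂ with hxp_def
  set xq := q₁ * x₁ + q₂ * x₂ with hxq_def
  have habs : |x₂ - xp| = p₁ * |x₂ - x₁| := by
    have h : x₂ - xp = p₁ * (x₂ - x₁) := by
      rw [hxp_def]; linear_combination (-x₂) * hp
    rw [h, abs_mul, abs_of_nonneg hp₁]
  rw [habs] at h2
  have hcancel : f' xp * (m * (xq - xp)) + f' xp * ((1 - m) * (x₂ - xp)) = 0 := by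
    rw [hxp_def, hxq_def]
    linear_combination (f' xp * x₁) * hmq1 + (f' xp * x₂) * hmq2 - (f' xp * x₂) * hp
  have hgoal_eq : (p₁ * f x₁ + p₂ * f x₂ - f xp) - m * (q₁ * f x₁ + q₂ * f x₂ - f xq)
      = m * (f xq - f xp) + (1 - m) * (f x₂ - f xp) := by
    linear_combination (-(f x₁)) * hmq1 - (f x₂) * hmq2 + (f x₂) * hp
  have mh1 := mul_le_mul_of_nonneg_left h1 hm0
  have mh2 := mul_le_mul_of_nonneg_left h2 (by linarith : (0:ℝ) ≤ 1 - m)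
  rw [ge_iff_le, hgoal_eq]
  nlinarith [mh1, mh2, hcancel]
end

section
/- Let f be Φ-uniformly convex and continuously differentiable on [0,b), x₁,x₂ ∈ [0,b), p₁+p₂ = q₁+q₂ = 1 with pᵢ ≥ 0, qᵢ > 0, and M = p₂/q₂ ≥ p₁/q₁. Then (p₂/q₂)·J₂(f,x,q) − J₂(f,x,p) ≥ ((p₂/q₂)q₁ − p₁)·Φ(q₂|x₂−x₁|) + Φ(|x̄_q − x̄_p|), where x̄_p = p₁x₁+p₂x₂, x̄_q = q₁x₁+q₂x₂. -/
theorem stmt12 {D : Set ℝ}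
    (hD : (∃ b : ℝ, 0 < b ∧ D = Set.Ico 0 b) ∨ D = Set.Ici 0)
    {f f' Φ : ℝ → ℝ}
    (hderiv : ∀ x ∈ D, HasDerivAt f (f' x) x)
    (hcont : ContinuousOn f' D)
    (hΦpos : ∀ t, 0 ≤ t → 0 ≤ Φ t)
    (hgrad : ∀ x ∈ D, ∀ y ∈ D, f y - f x ≥ f' x * (y - x) + Φ |y - x|)
    (x₁ x₂ : ℝ) (hx₁ : x₁ ∈ D) (hx₂ : x₂ ∈ D)
    (p₁ p₂ q₁ q₂ : ℝ) (hp₁ : 0 ≤ p₁) (hp₂ : 0 ≤ p₂) (hq₁ : 0 < q₁) (hq₂ : 0 < q₂)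
    (hp : p₁ + p₂ = 1) (hq : q₁ + q₂ = 1)
    (hMge : p₁ / q₁ ≤ p₂ / q₂) :
    (p₂ / q₂) * (q₁ * f x₁ + q₂ * f x₂ - f (q₁ * x₁ + q₂ * x₂)) -
      (p₁ * f x₁ + p₂ * f x₂ - f (p₁ * x₁ + p₂ * x₂)) ≥
    ((p₂ / q₂) * q₁ - p₁) * Φ (q₂ * |x₂ - x₁|) +
      Φ |(q₁ * x₁ + q₂ * x₂) - (p₁ * x₁ + p₂ * x₂)| := by
  have hconv : Convex ℝ D := by
    rcases hD with ⟨b, hb, rfl⟩ | rfl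
    · exact convex_Ico 0 b
    · exact convex_Ici 0
  set M := p₂ / q₂ with hM
  have hMq₂ : M * q₂ = p₂ := div_mul_cancel₀ p₂ hq₂.ne'
  have hMq₁ : p₁ ≤ M * q₁ := by
    have := (div_le_div_iff₀ hq₁ hq₂).mp hMge
    nlinarith
  have hM1 : 1 ≤ M := by nlinarith
  have hxp : p₁ * x₁ + p₂ * x₂ ∈ D := by
    have := hconv hx₁ hx₂ hp₁ hp₂ hp
    simpa using this
  have hxq : q₁ * x₁ + q₂ * x₂ ∈ D := by
    have := hconv hx₁ hx₂ hq₁.le hq₂.le hq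
    simpa using this
  have h1 := hgrad _ hxq _ hx₁
  have h2 := hgrad _ hxq _ hxp
  have e1 : |x₁ - (q₁ * x₁ + q₂ * x₂)| = q₂ * |x₂ - x₁| := by
    have h : x₁ - (q₁ * x₁ + q₂ * x₂) = q₂ * (x₂ - x₁) * (-1) := by
      linear_combination (-x₁) * hq
    rw [h, abs_mul, abs_mul, abs_of_pos hq₂]
    simp
  have e2 : |(p₁ * x₁ + p₂ * x₂) - (q₁ * x₁ + q₂ * x₂)|
      = |(q₁ * x₁ + q₂ * x₂) - (p₁ * x₁ + p₂ * x₂)| := abs_sub_comm _ _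
  rw [e1] at h1
  rw [e2] at h2
  have hp₁' : p₁ = 1 - p₂ := by linarith
  have hq₁' : q₁ = 1 - q₂ := by linarith
  have hcancel : (M - 1) * (f' (q₁ * x₁ + q₂ * x₂) * (x₁ - (q₁ * x₁ + q₂ * x₂)))
      + f' (q₁ * x₁ + q₂ * x₂) * ((p₁ * x₁ + p₂ * x₂) - (q₁ * x₁ + q₂ * x₂)) = 0 := by
    rw [hp₁', hq₁', ← hMq₂]; ring
  have hcoef : M * q₁ - p₁ = M - 1 := by
    rw [hp₁', hq₁', ← hMq₂]; ring
  have hgoal : M * (q₁ * f x₁ + q₂ * f x₂ - f (q₁ * x₁ + q₂ * x₂)) -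
      (p₁ * f x₁ + p₂ * f x₂ - f (p₁ * x₁ + p₂ * x₂))
      = (M - 1) * f x₁ + f (p₁ * x₁ + p₂ * x₂) - M * f (q₁ * x₁ + q₂ * x₂) := by
    rw [hp₁', hq₁', ← hMq₂]; ring
  rw [hcoef, hgoal]
  have hM0 : 0 ≤ M - 1 := by linarith
  nlinarith [mul_le_mul_of_nonneg_left h1 hM0, h2, hcancel]
end

section
/- Let f be Φ-uniformly convex and continuously differentiable on [0,b), x₁,x₂ ∈ [0,b), 0 ≤ p₁ ≤ 1/2, p₂ = 1−p₁. Then p₁f(x₁)+p₂f(x₂) − f(p₁x₁+p₂x₂) − 2p₁·((f(x₁)+f(x₂))/2 − f((x₁+x₂)/2)) ≥ 2p₁·Φ(|(x₁+x₂)/2 − (p₁x₁+p₂x₂)|) + (1−2p₁)·Φ(p₁|x₂−x₁|). -/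
theorem stmt13 {D : Set ℝ}
    (hD : (∃ b : ℝ, 0 < b ∧ D = Set.Ico 0 b) ∨ D = Set.Ici 0)
    {f f' Φ : ℝ → ℝ}
    (hderiv : ∀ x ∈ D, HasDerivAt f (f' x) x)
    (hcont : ContinuousOn f' D)
    (hΦpos : ∀ t, 0 ≤ t → 0 ≤ Φ t)
    (hgrad : ∀ x ∈ D, ∀ y ∈ D, f y - f x ≥ f' x * (y - x) + Φ |y - x|)
    (x₁ x₂ : ℝ) (hx₁ : x₁ ∈ D) (hx₂ : x₂ ∈ D)
    (p₁ p₂ : ℝ) (hp₁ : 0 ≤ p₁) (hp₁half : p₁ ≤ 1 / 2) (hp : p₂ = 1 - p₁) :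
    (p₁ * f x₁ + p₂ * f x₂ - f (p₁ * x₁ + p₂ * x₂)) -
      2 * p₁ * ((f x₁ + f x₂) / 2 - f ((x₁ + x₂) / 2)) ≥
    2 * p₁ * Φ |(x₁ + x₂) / 2 - (p₁ * x₁ + p₂ * x₂)| +
      (1 - 2 * p₁) * Φ (p₁ * |x₂ - x₁|) := by
  subst hp
  have hDconv : Convex ℝ D := by
    rcases hD with ⟨b, _, rfl⟩ | rfl
    · exact convex_Ico 0 b
    · exact convex_Ici 0
  have hz : p₁ * x₁ + (1 - p₁) * x₂ ∈ D := by
    have := hDconv hx₁ hx₂ (a := p₁) (b := 1 - p₁) hp₁ (by linarith) (by ring)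
    simpa [smul_eq_mul] using this
  have hm : (x₁ + x₂) / 2 ∈ D := by
    have := hDconv hx₁ hx₂ (a := 1/2) (b := 1/2) (by norm_num) (by norm_num)
      (by norm_num)
    have e : (1/2 : ℝ) • x₁ + (1/2 : ℝ) • x₂ = (x₁ + x₂) / 2 := by
      simp [smul_eq_mul]; ring
    rwa [e] at this
  have h1 := hgrad _ hz x₂ hx₂
  have h2 := hgrad _ hz _ hm
  have habs : |x₂ - (p₁ * x₁ + (1 - p₁) * x₂)| = p₁ * |x₂ - x₁| := by
    rw [show x₂ - (p₁ * x₁ + (1 - p₁) * x₂) = p₁ * (x₂ - x₁) by ring,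
      abs_mul, abs_of_nonneg hp₁]
  rw [habs] at h1
  nlinarith [mul_le_mul_of_nonneg_left h1 (by linarith : (0:ℝ) ≤ 1 - 2 * p₁),
    mul_le_mul_of_nonneg_left h2 (by linarith : (0:ℝ) ≤ 2 * p₁)]
end

section
/- Let f be Φ-uniformly convex and continuously differentiable on [0,b), x₁,x₂ ∈ [0,b), 1/2 ≤ p₂ ≤ 1, p₁ = 1−p₂. Then 2p₂·((f(x₁)+f(x₂))/2 − f((x₁+x₂)/2)) − (p₁f(x₁)+p₂f(x₂) − f(p₁x₁+p₂x₂)) ≥ (p₂−p₁)·Φ(|x₂−x₁|/2) + Φ(|(x₁+x₂)/2 − (p₁x₁+p₂x₂)|). -/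
theorem stmt14 {D : Set ℝ}
    (hD : (∃ b : ℝ, 0 < b ∧ D = Set.Ico 0 b) ∨ D = Set.Ici 0)
    {f f' Φ : ℝ → ℝ}
    (hderiv : ∀ x ∈ D, HasDerivAt f (f' x) x)
    (hcont : ContinuousOn f' D)
    (hΦpos : ∀ t, 0 ≤ t → 0 ≤ Φ t)
    (hgrad : ∀ x ∈ D, ∀ y ∈ D, f y - f x ≥ f' x * (y - x) + Φ |y - x|)
    (x₁ x₂ : ℝ) (hx₁ : x₁ ∈ D) (hx₂ : x₂ ∈ D)
    (p₁ p₂ : ℝ) (hp₂half : 1 / 2 ≤ p₂) (hp₂le : p₂ ≤ 1) (hp : p₁ = 1 - p₂) :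
    2 * p₂ * ((f x₁ + f x₂) / 2 - f ((x₁ + x₂) / 2)) -
      (p₁ * f x₁ + p₂ * f x₂ - f (p₁ * x₁ + p₂ * x₂)) ≥
    (p₂ - p₁) * Φ (|x₂ - x₁| / 2) +
      Φ |(x₁ + x₂) / 2 - (p₁ * x₁ + p₂ * x₂)| := by
  subst hp
  have hconv : Convex ℝ D := by
    rcases hD with ⟨b, hb, rfl⟩ | rfl
    · exact convex_Ico 0 b
    · exact convex_Ici 0
  have hm : (x₁ + x₂) / 2 ∈ D := by
    have h := hconv hx₁ hx₂ (by norm_num : (0:ℝ) ≤ 1/2) (by norm_num : (0:ℝ) ≤ 1/2)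
      (by norm_num)
    have e : (1/2 : ℝ) • x₁ + (1/2 : ℝ) • x₂ = (x₁ + x₂) / 2 := by
      simp [smul_eq_mul]; ring
    rwa [e] at h
  have hz : (1 - p₂) * x₁ + p₂ * x₂ ∈ D := by
    have h := hconv hx₁ hx₂ (by linarith : (0:ℝ) ≤ 1 - p₂) (by linarith : (0:ℝ) ≤ p₂)
      (by ring)
    simpa [smul_eq_mul] using h
  have h1 := hgrad _ hm x₁ hx₁
  have h2 := hgrad _ hm _ hz
  have e1 : |x₁ - (x₁ + x₂) / 2| = |x₂ - x₁| / 2 := by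
    rw [abs_sub_comm]
    have : (x₁ + x₂) / 2 - x₁ = (x₂ - x₁) / 2 := by ring
    rw [this, abs_div, abs_two]
  rw [e1] at h1
  rw [abs_sub_comm ((1 - p₂) * x₁ + p₂ * x₂)] at h2
  have hA : (0:ℝ) ≤ p₂ - (1 - p₂) := by linarith
  have h1nn : 0 ≤ f x₁ - f ((x₁ + x₂) / 2) -
      (f' ((x₁ + x₂) / 2) * (x₁ - (x₁ + x₂) / 2) + Φ (|x₂ - x₁| / 2)) := by linarith
  have key := mul_nonneg hA h1nn
  nlinarith [key, h2]
end

section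
/- Let f be Φ-uniformly convex on [a,b] with Φ ≥ 0, and suppose p₁/q₁ = m ≤ p₂/q₂ with pᵢ ≥ 0, qᵢ > 0, p₁+p₂ = q₁+q₂ = 1. Then p₁f(a)+p₂f(b) − f(p₁a+p₂b) − m·(q₁f(a)+q₂f(b) − f(q₁a+q₂b)) ≥ m(1−m)·Φ(q₁(b−a)). -/
/-!
Write `Q = q₁ a + q₂ b`. Since `p₁ = m q₁`, the point `p₁ a + p₂ b` is the convex combination
`m Q + (1 - m) b`, and `p₂ - m q₂ = 1 - m`; so the left-hand side equals
`m f(Q) + (1 - m) f(b) - f(m Q + (1 - m) b)`, and uniform convexity applied to `Q` and `b`,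
which are at distance `q₁ (b - a)`, bounds it below by `m (1 - m) Φ(q₁ (b - a))`.
-/

open Set

section UniformConvex

variable {E : Type*} [NormedAddCommGroup E] [NormedSpace ℝ E] {s : Set E} {φ : ℝ → ℝ} {f : E → ℝ}

lemma smul_add_smul_eq_smul_add_one_sub_smul {x y : E} {p₁ p₂ q₁ q₂ m : ℝ}
    (hp : p₁ + p₂ = 1) (hq : q₁ + q₂ = 1) (hpm : p₁ = m * q₁) :
    p₁ • x + p₂ • y = m • (q₁ • x + q₂ • y) + (1 - m) • y := by
  obtain rfl : p₂ = 1 - p₁ := by linarith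
  obtain rfl : q₂ = 1 - q₁ := by linarith
  subst hpm
  module

lemma norm_smul_add_smul_sub_right {x y : E} {q₁ q₂ : ℝ} (hq₁ : 0 ≤ q₁) (hq : q₁ + q₂ = 1) :
    ‖q₁ • x + q₂ • y - y‖ = q₁ * ‖x - y‖ := by
  obtain rfl : q₂ = 1 - q₁ := by linarith
  rw [show q₁ • x + (1 - q₁) • y - y = q₁ • (x - y) by module, norm_smul,
    Real.norm_of_nonneg hq₁]

theorem UniformConvexOn.mul_modulus_le_jensenGap_sub_mul_jensenGap (hf : UniformConvexOn s φ f)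
    {x y : E} (hx : x ∈ s) (hy : y ∈ s) {p₁ p₂ q₁ q₂ m : ℝ} (hq₁ : 0 ≤ q₁) (hq₂ : 0 ≤ q₂)
    (hp : p₁ + p₂ = 1) (hq : q₁ + q₂ = 1) (hpm : p₁ = m * q₁) (hm₀ : 0 ≤ m) (hm₁ : m ≤ 1) :
    m * (1 - m) * φ (q₁ * ‖x - y‖) ≤
      p₁ * f x + p₂ * f y - f (p₁ • x + p₂ • y) -
        m * (q₁ * f x + q₂ * f y - f (q₁ • x + q₂ • y)) := by
  have hQ : q₁ • x + q₂ • y ∈ s := hf.1 hx hy hq₁ hq₂ hq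
  have key := hf.2 hQ hy hm₀ (sub_nonneg.2 hm₁) (add_sub_cancel m 1)
  rw [← smul_add_smul_eq_smul_add_one_sub_smul hp hq hpm, norm_smul_add_smul_sub_right hq₁ hq] at key
  simp only [smul_eq_mul] at key
  have hweights : p₁ * f x + p₂ * f y - m * (q₁ * f x + q₂ * f y) = (1 - m) * f y := by
    linear_combination (f x - f y) * hpm + f y * hp - m * f y * hq
  linarith

end UniformConvex

lemma uniformConvexOn_Icc_of_forall {a b : ℝ} {f Φ : ℝ → ℝ}
    (huc : ∀ x ∈ Icc a b, ∀ y ∈ Icc a b, ∀ t ∈ Icc (0 : ℝ) 1,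
      t * f x + (1 - t) * f y ≥ f (t * x + (1 - t) * y) + t * (1 - t) * Φ |x - y|) :
    UniformConvexOn (Icc a b) Φ f := by
  refine ⟨convex_Icc a b, fun x hx y hy s t hs ht hst => ?_⟩
  obtain rfl : t = 1 - s := by linarith
  have h := huc x hx y hy s ⟨hs, by linarith⟩
  simp only [smul_eq_mul, Real.norm_eq_abs]
  linarith

lemma div_le_one_of_div_le_div_of_add_eq_one {p₁ p₂ q₁ q₂ : ℝ} (hq₁ : 0 < q₁) (hq₂ : 0 < q₂)
    (hp : p₁ + p₂ = 1) (hq : q₁ + q₂ = 1) (h : p₁ / q₁ ≤ p₂ / q₂) : p₁ / q₁ ≤ 1 := by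
  rw [div_le_div_iff₀ hq₁ hq₂] at h
  rw [div_le_one hq₁]
  nlinarith

theorem stmt16_general {a b : ℝ} (hab : a ≤ b) {f Φ : ℝ → ℝ}
    (huc : ∀ x ∈ Set.Icc a b, ∀ y ∈ Set.Icc a b, ∀ t ∈ Set.Icc (0 : ℝ) 1,
      t * f x + (1 - t) * f y ≥ f (t * x + (1 - t) * y) + t * (1 - t) * Φ |x - y|)
    (p₁ p₂ q₁ q₂ m : ℝ) (hp₁ : 0 ≤ p₁) (hq₁ : 0 < q₁) (hq₂ : 0 < q₂)
    (hp : p₁ + p₂ = 1) (hq : q₁ + q₂ = 1)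
    (hm : m = p₁ / q₁) (hmle : p₁ / q₁ ≤ p₂ / q₂) :
    p₁ * f a + p₂ * f b - f (p₁ * a + p₂ * b) -
      m * (q₁ * f a + q₂ * f b - f (q₁ * a + q₂ * b)) ≥
    m * (1 - m) * Φ (q₁ * (b - a)) := by
  subst hm
  have h := (uniformConvexOn_Icc_of_forall huc).mul_modulus_le_jensenGap_sub_mul_jensenGap
    (left_mem_Icc.2 hab) (right_mem_Icc.2 hab) hq₁.le hq₂.le hp hq
    (div_mul_cancel₀ p₁ hq₁.ne').symm (div_nonneg hp₁ hq₁.le)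
    (div_le_one_of_div_le_div_of_add_eq_one hq₁ hq₂ hp hq hmle)
  rwa [Real.norm_eq_abs, abs_sub_comm, abs_of_nonneg (sub_nonneg.2 hab)] at h

theorem stmt16 {a b : ℝ} (hab : a ≤ b) {f Φ : ℝ → ℝ}
    (hΦpos : ∀ t ∈ Set.Icc 0 (b - a), 0 ≤ Φ t)
    (huc : ∀ x ∈ Set.Icc a b, ∀ y ∈ Set.Icc a b, ∀ t ∈ Set.Icc (0 : ℝ) 1,
      t * f x + (1 - t) * f y ≥ f (t * x + (1 - t) * y) + t * (1 - t) * Φ |x - y|)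
    (p₁ p₂ q₁ q₂ m : ℝ) (hp₁ : 0 ≤ p₁) (hp₂ : 0 ≤ p₂) (hq₁ : 0 < q₁) (hq₂ : 0 < q₂)
    (hp : p₁ + p₂ = 1) (hq : q₁ + q₂ = 1)
    (hm : m = p₁ / q₁) (hmle : p₁ / q₁ ≤ p₂ / q₂) :
    p₁ * f a + p₂ * f b - f (p₁ * a + p₂ * b) -
      m * (q₁ * f a + q₂ * f b - f (q₁ * a + q₂ * b)) ≥
    m * (1 - m) * Φ (q₁ * (b - a)) :=
  stmt16_general hab huc p₁ p₂ q₁ q₂ m hp₁ hq₁ hq₂ hp hq hm hmle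
end

section
/- Let f be Φ-uniformly convex on [a,b] with Φ ≥ 0, and 0 ≤ p₁ ≤ 1/2, p₂ = 1−p₁. Then p₁f(a)+p₂f(b) − f(p₁a+p₂b) − 2p₁·((f(a)+f(b))/2 − f((a+b)/2)) ≥ 2p₁(1−2p₁)·Φ((b−a)/2). -/
theorem stmt17 {a b : ℝ} (hab : a ≤ b) {f Φ : ℝ → ℝ}
    (hΦpos : ∀ t ∈ Set.Icc 0 (b - a), 0 ≤ Φ t)
    (huc : ∀ x ∈ Set.Icc a b, ∀ y ∈ Set.Icc a b, ∀ t ∈ Set.Icc (0 : ℝ) 1,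
      t * f x + (1 - t) * f y ≥ f (t * x + (1 - t) * y) + t * (1 - t) * Φ |x - y|)
    (p₁ p₂ : ℝ) (hp₁ : 0 ≤ p₁) (hp₁half : p₁ ≤ 1 / 2) (hp : p₂ = 1 - p₁) :
    p₁ * f a + p₂ * f b - f (p₁ * a + p₂ * b) -
      2 * p₁ * ((f a + f b) / 2 - f ((a + b) / 2)) ≥
    2 * p₁ * (1 - 2 * p₁) * Φ ((b - a) / 2) := by
  have h := huc ((a + b) / 2) ⟨by linarith, by linarith⟩ b ⟨hab, le_refl b⟩
    (2 * p₁) ⟨by linarith, by linarith⟩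
  have habs : |(a + b) / 2 - b| = (b - a) / 2 := by
    rw [abs_of_nonpos (by linarith)]; ring
  have harg : 2 * p₁ * ((a + b) / 2) + (1 - 2 * p₁) * b = p₁ * a + p₂ * b := by
    rw [hp]; ring
  rw [habs, harg] at h
  subst hp
  nlinarith [h]
end
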